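/- arXiv:2111.14244 — 3 statements merged into one kernel-verified Lean document; each statement's English description precedes it below -/
import Mathlib

section
/- Let n ≥ 1 be an integer and let x1, x2, y1, y2 be real numbers with x1 < y1 and y2 < x2. Then |x1 − y2|^n + |y1 − x2|^n ≤ |x1 − x2|^n + |y1 − y2|^n. -/
/-!
Write `a = x1 - y2`, `b = y1 - x2`, `c = x1 - x2`, `d = y1 - y2`. Then `a + b = c + d` and
`a, b ∈ [c, d]`, so `(a, b)` is majorised by `(c, d)`: both `a` and `b` are convex combinations
of `c` and `d` with swapped weights, and Jensen's inequality for the convex function `t ↦ |t| ^ n`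
gives `|a| ^ n + |b| ^ n ≤ |c| ^ n + |d| ^ n`.
-/

theorem ConvexOn.apply_add_apply_le_of_add_eq {𝕜 β : Type*} [Field 𝕜] [LinearOrder 𝕜]
    [IsStrictOrderedRing 𝕜] [AddCommGroup β] [PartialOrder β] [IsOrderedAddMonoid β]
    [Module 𝕜 β] {s : Set 𝕜} {f : 𝕜 → β} (hf : ConvexOn 𝕜 s f) {a b c d : 𝕜}
    (hc : c ∈ s) (hd : d ∈ s) (hca : c ≤ a) (had : a ≤ d) (habcd : a + b = c + d) :
    f a + f b ≤ f c + f d := by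
  rcases hca.eq_or_lt with rfl | hca_lt
  · rw [add_left_cancel habcd]
  have hcd : 0 < d - c := sub_pos.2 (hca_lt.trans_le had)
  set lam := (d - a) / (d - c)
  set mu := (a - c) / (d - c)
  have hlam : 0 ≤ lam := div_nonneg (sub_nonneg.2 had) hcd.le
  have hmu : 0 ≤ mu := div_nonneg (sub_nonneg.2 hca) hcd.le
  have hsum : lam + mu = 1 := by rw [← add_div, div_eq_one_iff_eq hcd.ne']; ring
  have ha : lam • c + mu • d = a := by
    simp only [lam, mu, smul_eq_mul]; field_simp; ring
  have hb : lam • d + mu • c = b := by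
    simp only [lam, mu, smul_eq_mul]; field_simp; linear_combination (c - d) * habcd
  clear_value lam mu
  calc f a + f b
      ≤ (lam • f c + mu • f d) + (lam • f d + mu • f c) := by
        rw [← ha, ← hb]
        exact add_le_add (hf.2 hc hd hlam hmu hsum) (hf.2 hd hc hlam hmu hsum)
    _ = f c + f d := by
        linear_combination (norm := module) hsum • (f c + f d)

theorem swapping_inequality_general (n : ℕ) (x1 x2 y1 y2 : ℝ)
    (hxy : x1 < y1) (hyx : y2 < x2) :
    |x1 - y2| ^ n + |y1 - x2| ^ n ≤ |x1 - x2| ^ n + |y1 - y2| ^ n := by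
  have hconvex : ConvexOn ℝ Set.univ (fun t : ℝ => |t| ^ n) :=
    (convexOn_univ_norm (E := ℝ)).pow (fun t _ => norm_nonneg t) n
  exact hconvex.apply_add_apply_le_of_add_eq (Set.mem_univ _) (Set.mem_univ _)
    (by linarith) (by linarith) (by ring)

theorem swapping_inequality (n : ℕ) (hn : 1 ≤ n) (x1 x2 y1 y2 : ℝ)
    (hxy : x1 < y1) (hyx : y2 < x2) :
    |x1 - y2| ^ n + |y1 - x2| ^ n ≤ |x1 - x2| ^ n + |y1 - y2| ^ n :=
  swapping_inequality_general n x1 x2 y1 y2 hxy hyx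
end

section
/- Let p and q be probability measures on ℝ with finite n-th moments, for an integer n ≥ 1. Let P and Q be their cumulative distribution functions and let P⁻¹, Q⁻¹ be the corresponding quantile functions. Then W_n(p,q)^n = ∫₀¹ |P⁻¹(t) − Q⁻¹(t)|^n dt, i.e. the n-th Wasserstein distance between p and q equals (∫₀¹ |P⁻¹(t) − Q⁻¹(t)|^n dt)^{1/n}. -/
open MeasureTheory ProbabilityTheory Set

/-- The set of couplings of two measures: measures on the product space whose
first and second marginals are `p` and `q` respectively. -/
def couplings {α β : Type*} [MeasurableSpace α] [MeasurableSpace β]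
    (p : Measure α) (q : Measure β) : Set (Measure (α × β)) :=
  {ν | ν.map Prod.fst = p ∧ ν.map Prod.snd = q}

/-- The quantile function (generalized inverse CDF) of a measure on `ℝ`. -/
noncomputable def quantile (p : Measure ℝ) (t : ℝ) : ℝ :=
  sInf {x : ℝ | t ≤ cdf p x}

/-!
Call `(x, y)` separated by `(s, t)`, `s ≤ t`, if one of `x, y` is `≤ s` and the other `> t`.
A coupling `ν` of `p` and `q` gives the separated pairs mass at least
`(Q(s) - P(t))₊ + (P(s) - Q(t))₊`, by looking at the marginals alone, and the quantile coupling
`(P⁻¹(U), Q⁻¹(U))`, `U` uniform on `(0, 1)`, attains this bound for every `s ≤ t` at once.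
By Fubini, the quantile coupling therefore minimises every cost of the form
`c(x, y) = κ {(s, t) | (x, y) is separated by (s, t)}` with `κ` carried by `{s ≤ t}`.
The cost `|x - y| ^ (k + 1)` is of this form: `κ` is the image of `μ ⊗ volume` under
`(r, s) ↦ (s, s + r)`, where `μ` on `[0, ∞)` satisfies `∫ (L - r)₊ dμ(r) = L ^ (k + 1)`.
-/

section Quantile

variable (p : Measure ℝ)

lemma bddBelow_setOf_le_cdf {t : ℝ} (ht : 0 < t) : BddBelow {x : ℝ | t ≤ cdf p x} := by
  obtain ⟨x₀, hx₀⟩ := ((tendsto_cdf_atBot p).eventually (eventually_lt_nhds ht)).exists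
  exact ⟨x₀, fun y hy => le_of_not_gt fun h =>
    ((monotone_cdf p h.le).trans_lt hx₀).not_ge hy⟩

lemma nonempty_setOf_le_cdf {t : ℝ} (ht : t < 1) : {x : ℝ | t ≤ cdf p x}.Nonempty := by
  obtain ⟨x, hx⟩ := ((tendsto_cdf_atTop p).eventually (eventually_gt_nhds ht)).exists
  exact ⟨x, hx.le⟩

lemma le_cdf_quantile {t : ℝ} (ht : t ∈ Ioo (0 : ℝ) 1) : t ≤ cdf p (quantile p t) := by
  have h_above : ∀ x, quantile p t < x → t ≤ cdf p x := fun x hx => by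
    obtain ⟨y, hy, hyx⟩ :=
      (csInf_lt_iff (bddBelow_setOf_le_cdf p ht.1) (nonempty_setOf_le_cdf p ht.2)).1 hx
    exact hy.trans (monotone_cdf p hyx.le)
  exact ge_of_tendsto
    ((cdf p).right_continuous _ |>.mono_left (nhdsWithin_mono _ Ioi_subset_Ici_self))
    (eventually_nhdsWithin_of_forall h_above)

lemma quantile_le_iff {t : ℝ} (ht : t ∈ Ioo (0 : ℝ) 1) {x : ℝ} :
    quantile p t ≤ x ↔ t ≤ cdf p x :=
  ⟨fun h => (le_cdf_quantile p ht).trans (monotone_cdf p h),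
    fun h => csInf_le (bddBelow_setOf_le_cdf p ht.1) h⟩

lemma lt_quantile_iff {t : ℝ} (ht : t ∈ Ioo (0 : ℝ) 1) {x : ℝ} :
    x < quantile p t ↔ cdf p x < t := by
  simpa only [not_le] using (quantile_le_iff p ht).not

lemma monotoneOn_quantile : MonotoneOn (quantile p) (Ioo 0 1) := fun _ hs _ ht hst =>
  (quantile_le_iff p hs).2 (hst.trans (le_cdf_quantile p ht))

lemma aemeasurable_quantile : AEMeasurable (quantile p) (volume.restrict (Ioo 0 1)) :=
  aemeasurable_restrict_of_monotoneOn measurableSet_Ioo (monotoneOn_quantile p)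

end Quantile

lemma volume_Ioc_inter_Ioo_zero_one {a b : ℝ} (ha : 0 ≤ a) (hb : b ≤ 1) :
    volume (Ioc a b ∩ Ioo 0 1) = ENNReal.ofReal (b - a) :=
  le_antisymm ((measure_mono inter_subset_left).trans_eq Real.volume_Ioc)
    (Real.volume_Ioo ▸ measure_mono fun _ hu =>
      ⟨Ioo_subset_Ioc_self hu, ha.trans_lt hu.1, hu.2.trans_le hb⟩)

lemma volume_quantile_le_lt (p q : Measure ℝ) [IsProbabilityMeasure p] [IsProbabilityMeasure q]
    (s t : ℝ) :
    volume ({u | quantile q u ≤ s ∧ t < quantile p u} ∩ Ioo 0 1) = q (Iic s) - p (Iic t) := by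
  have h_eq : {u | quantile q u ≤ s ∧ t < quantile p u} ∩ Ioo 0 1
      = Ioc (cdf p t) (cdf q s) ∩ Ioo 0 1 := by
    ext u
    refine and_congr_left fun hu => ?_
    rw [mem_ofPred_eq, quantile_le_iff q hu, lt_quantile_iff p hu, mem_Ioc, and_comm]
  rw [h_eq, volume_Ioc_inter_Ioo_zero_one (cdf_nonneg p t) (cdf_le_one q s),
    ENNReal.ofReal_sub _ (cdf_nonneg p t), ofReal_cdf, ofReal_cdf]

lemma map_quantile (p : Measure ℝ) [IsProbabilityMeasure p] :
    (volume.restrict (Ioo 0 1)).map (quantile p) = p := by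
  refine (Measure.ext_of_Iic p _ fun x => ?_).symm
  have h_eq : quantile p ⁻¹' Iic x ∩ Ioo 0 1 = Ioc 0 (cdf p x) ∩ Ioo 0 1 := by
    ext u
    refine and_congr_left fun hu => ?_
    rw [mem_preimage, mem_Iic, quantile_le_iff p hu, mem_Ioc, iff_and_self]
    exact fun _ => hu.1
  rw [Measure.map_apply_of_aemeasurable (aemeasurable_quantile p) measurableSet_Iic,
    Measure.restrict_apply' measurableSet_Ioo, h_eq,
    volume_Ioc_inter_Ioo_zero_one le_rfl (cdf_le_one p x), sub_zero, ofReal_cdf]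

noncomputable def quantileCoupling (p q : Measure ℝ) : Measure (ℝ × ℝ) :=
  (volume.restrict (Ioo 0 1)).map fun u => (quantile p u, quantile q u)

section QuantileCoupling

variable (p q : Measure ℝ)

instance : SFinite (quantileCoupling p q) := by
  unfold quantileCoupling
  infer_instance

lemma aemeasurable_quantile_prodMk :
    AEMeasurable (fun u => (quantile p u, quantile q u)) (volume.restrict (Ioo 0 1)) :=
  (aemeasurable_quantile p).prodMk (aemeasurable_quantile q)

lemma quantileCoupling_mem_couplings [IsProbabilityMeasure p] [IsProbabilityMeasure q] :
    quantileCoupling p q ∈ couplings p q := by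
  refine ⟨?_, ?_⟩ <;>
  rw [quantileCoupling, AEMeasurable.map_map_of_aemeasurable (by fun_prop)
    (aemeasurable_quantile_prodMk p q)]
  exacts [map_quantile p, map_quantile q]

lemma lintegral_edist_pow_quantileCoupling (n : ℕ) :
    ∫⁻ z, edist z.1 z.2 ^ n ∂quantileCoupling p q
      = ∫⁻ t in Ioo (0 : ℝ) 1, ENNReal.ofReal (|quantile p t - quantile q t| ^ n) := by
  rw [quantileCoupling, lintegral_map' (by fun_prop) (aemeasurable_quantile_prodMk p q)]
  simp only [edist_dist, Real.dist_eq, ENNReal.ofReal_pow (abs_nonneg _)]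

end QuantileCoupling

def separatingPairs (x y : ℝ) : Set (ℝ × ℝ) :=
  {st | (y ≤ st.1 ∧ st.2 < x) ∨ (x ≤ st.1 ∧ st.2 < y)}

lemma separatingPairs_comm (x y : ℝ) : separatingPairs x y = separatingPairs y x := by
  ext
  exact or_comm

lemma measurableSet_setOf_mem_separatingPairs :
    MeasurableSet {w : (ℝ × ℝ) × (ℝ × ℝ) | w.2 ∈ separatingPairs w.1.1 w.1.2} := by
  unfold separatingPairs
  measurability

lemma measurableSet_separatingPairs (x y : ℝ) : MeasurableSet (separatingPairs x y) :=
  measurableSet_setOf_mem_separatingPairs.preimage (measurable_prodMk_left (x := (x, y)))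

lemma lintegral_measure_separatingPairs_comm (m κ : Measure (ℝ × ℝ)) [SFinite m]
    [SFinite κ] :
    ∫⁻ z, κ (separatingPairs z.1 z.2) ∂m
      = ∫⁻ st, m {z | st ∈ separatingPairs z.1 z.2} ∂κ :=
  (Measure.prod_apply measurableSet_setOf_mem_separatingPairs).symm.trans
    (Measure.prod_apply_symm measurableSet_setOf_mem_separatingPairs)

lemma measure_separatingPairs_section (ν : Measure (ℝ × ℝ)) {s t : ℝ} (hst : s ≤ t) :
    ν {z | (s, t) ∈ separatingPairs z.1 z.2}
      = ν {z | z.2 ≤ s ∧ t < z.1} + ν {z | z.1 ≤ s ∧ t < z.2} :=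
  measure_union (disjoint_left.2 fun _ h₁ h₂ => (h₂.1.trans_lt (hst.trans_lt h₁.2)).false)
    ((measurableSet_le measurable_fst measurable_const).inter
      (measurableSet_lt measurable_const measurable_snd))

section Coupling

variable {p q : Measure ℝ}

lemma tsub_add_tsub_le_measure_separatingPairs_section {ν : Measure (ℝ × ℝ)}
    (hν : ν ∈ couplings p q) {s t : ℝ} (hst : s ≤ t) :
    (q (Iic s) - p (Iic t)) + (p (Iic s) - q (Iic t))
      ≤ ν {z | (s, t) ∈ separatingPairs z.1 z.2} := by
  obtain ⟨rfl, rfl⟩ := hν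
  simp only [Measure.map_apply measurable_fst measurableSet_Iic,
    Measure.map_apply measurable_snd measurableSet_Iic, measure_separatingPairs_section ν hst]
  gcongr <;> exact le_measure_sdiff.trans (measure_mono fun z hz => ⟨hz.1, not_le.1 hz.2⟩)

lemma quantileCoupling_separatingPairs_section [IsProbabilityMeasure p] [IsProbabilityMeasure q]
    {s t : ℝ} (hst : s ≤ t) :
    quantileCoupling p q {z | (s, t) ∈ separatingPairs z.1 z.2}
      = (q (Iic s) - p (Iic t)) + (p (Iic s) - q (Iic t)) := by
  rw [measure_separatingPairs_section _ hst, quantileCoupling,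
    Measure.map_apply_of_aemeasurable (aemeasurable_quantile_prodMk p q) (by measurability),
    Measure.map_apply_of_aemeasurable (aemeasurable_quantile_prodMk p q) (by measurability),
    Measure.restrict_apply' measurableSet_Ioo, Measure.restrict_apply' measurableSet_Ioo]
  exact congr_arg₂ (· + ·) (volume_quantile_le_lt p q s t) (volume_quantile_le_lt q p s t)

lemma isFiniteMeasure_of_mem_couplings [IsFiniteMeasure p] {ν : Measure (ℝ × ℝ)}
    (hν : ν ∈ couplings p q) : IsFiniteMeasure ν :=
  have : IsFiniteMeasure (ν.map Prod.fst) := hν.1 ▸ inferInstance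
  Measure.isFiniteMeasure_of_map measurable_fst.aemeasurable

theorem lintegral_separatingPairs_quantileCoupling_le [IsProbabilityMeasure p]
    [IsProbabilityMeasure q] (κ : Measure (ℝ × ℝ)) [SFinite κ] (hκ : ∀ᵐ st ∂κ, st.1 ≤ st.2)
    {ν : Measure (ℝ × ℝ)} (hν : ν ∈ couplings p q) :
    ∫⁻ z, κ (separatingPairs z.1 z.2) ∂quantileCoupling p q
      ≤ ∫⁻ z, κ (separatingPairs z.1 z.2) ∂ν := by
  have := isFiniteMeasure_of_mem_couplings hν
  rw [lintegral_measure_separatingPairs_comm, lintegral_measure_separatingPairs_comm]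
  exact lintegral_mono_ae <| hκ.mono fun st hst =>
    (quantileCoupling_separatingPairs_section hst).trans_le
      (tsub_add_tsub_le_measure_separatingPairs_section hν hst)

end Coupling

lemma integral_pow_mul_sub (k : ℕ) (L : ℝ) :
    ∫ r in (0 : ℝ)..L, ((k : ℝ) + 2) * (k + 1) * r ^ k * (L - r) = L ^ (k + 2) := by
  have h_expand : ∀ r : ℝ, ((k : ℝ) + 2) * (k + 1) * r ^ k * (L - r)
      = ((k : ℝ) + 2) * (k + 1) * L * r ^ k - ((k : ℝ) + 2) * (k + 1) * r ^ (k + 1) :=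
    fun r => by ring
  simp_rw [h_expand]
  rw [intervalIntegral.integral_sub (by apply Continuous.intervalIntegrable; fun_prop)
      (by apply Continuous.intervalIntegrable; fun_prop),
    intervalIntegral.integral_const_mul, intervalIntegral.integral_const_mul,
    integral_pow, integral_pow]
  push_cast
  field_simp
  ring

/-- The second distributional derivative of `r ↦ (max r 0) ^ (k + 1)`. -/
noncomputable def powWeight : ℕ → Measure ℝ
  | 0 => Measure.dirac 0
  | k + 1 => (volume.restrict (Ioi 0)).withDensity
      fun r => ENNReal.ofReal ((k + 2) * (k + 1) * r ^ k)

instance (k : ℕ) : SFinite (powWeight k) := by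
  cases k <;> unfold powWeight <;> infer_instance

lemma ae_nonneg_powWeight (k : ℕ) : ∀ᵐ r ∂powWeight k, 0 ≤ r := by
  cases k with
  | zero => exact (ae_dirac_iff (measurableSet_Ici (a := (0 : ℝ)))).2 le_rfl
  | succ k =>
    exact (withDensity_absolutelyContinuous _ _).ae_le
      ((ae_restrict_mem measurableSet_Ioi).mono fun _ hr => le_of_lt hr)

lemma lintegral_ofReal_sub_powWeight (k : ℕ) {L : ℝ} (hL : 0 ≤ L) :
    ∫⁻ r, ENNReal.ofReal (L - r) ∂powWeight k = ENNReal.ofReal (L ^ (k + 1)) := by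
  cases k with
  | zero => simp [powWeight]
  | succ k =>
    have h_zero : ∫⁻ r in Ioi L,
        ENNReal.ofReal ((k + 2) * (k + 1) * r ^ k) * ENNReal.ofReal (L - r) = 0 :=
      setLIntegral_eq_zero measurableSet_Ioi fun r hr => by
        simp [ENNReal.ofReal_eq_zero.2 (sub_nonpos.2 (le_of_lt hr))]
    rw [powWeight, lintegral_withDensity_eq_lintegral_mul _ (by fun_prop) (by fun_prop),
      ← Ioc_union_Ioi_eq_Ioi hL, lintegral_union measurableSet_Ioi Ioc_disjoint_Ioi_same]
    simp only [Pi.mul_apply]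
    rw [h_zero, add_zero, ← integral_pow_mul_sub, intervalIntegral.integral_of_le hL,
      ofReal_integral_eq_lintegral_ofReal]
    · refine setLIntegral_congr_fun measurableSet_Ioc fun r hr => ?_
      exact (ENNReal.ofReal_mul (by have := hr.1.le; positivity)).symm
    · exact (Continuous.integrableOn_Ioc (by fun_prop))
    · exact (ae_restrict_mem measurableSet_Ioc).mono fun r hr =>
        mul_nonneg (by have := hr.1.le; positivity) (sub_nonneg.2 hr.2)

noncomputable def costKernel (k : ℕ) : Measure (ℝ × ℝ) :=
  ((powWeight k).prod volume).map fun rs => (rs.2, rs.2 + rs.1)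

instance (k : ℕ) : SFinite (costKernel k) := by
  unfold costKernel
  infer_instance

lemma ae_fst_le_snd_costKernel (k : ℕ) : ∀ᵐ st ∂costKernel k, st.1 ≤ st.2 :=
  (ae_map_iff (by fun_prop) (measurableSet_le measurable_fst measurable_snd)).2 <|
    Measure.quasiMeasurePreserving_fst.ae (ae_nonneg_powWeight k) |>.mono
      fun _ hr => le_add_of_nonneg_right hr

lemma volume_separatingPairs_shift (x y : ℝ) {r : ℝ} (hr : 0 ≤ r) :
    volume {s | (s, s + r) ∈ separatingPairs x y} = ENNReal.ofReal (|x - y| - r) := by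
  wlog hyx : y ≤ x generalizing x y
  · rw [separatingPairs_comm, abs_sub_comm]
    exact this y x (le_of_not_ge hyx)
  have h_eq : {s | (s, s + r) ∈ separatingPairs x y} = Ico y (x - r) := by
    ext s
    simp only [separatingPairs, mem_ofPred_eq, mem_Ico, lt_sub_iff_add_lt]
    refine ⟨?_, Or.inl⟩
    rintro (h | ⟨hxs, hsy⟩)
    · exact h
    · linarith
  rw [h_eq, Real.volume_Ico, abs_of_nonneg (sub_nonneg.2 hyx), sub_right_comm]

theorem costKernel_separatingPairs (k : ℕ) (x y : ℝ) :
    costKernel k (separatingPairs x y) = edist x y ^ (k + 1) := by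
  rw [costKernel, Measure.map_apply (by fun_prop) (measurableSet_separatingPairs x y),
    Measure.prod_apply ((measurableSet_separatingPairs x y).preimage (by fun_prop))]
  refine (lintegral_congr_ae ((ae_nonneg_powWeight k).mono fun r hr =>
    volume_separatingPairs_shift x y hr)).trans ?_
  rw [lintegral_ofReal_sub_powWeight k (abs_nonneg _), edist_dist, Real.dist_eq,
    ENNReal.ofReal_pow (abs_nonneg _)]

theorem wasserstein_eq_integral_quantile_general (n : ℕ) (hn : 1 ≤ n)
    (p q : Measure ℝ) [IsProbabilityMeasure p] [IsProbabilityMeasure q] :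
    sInf ((fun ν => ∫⁻ z, edist z.1 z.2 ^ n ∂ν) '' couplings p q)
      = ∫⁻ t in Ioo (0 : ℝ) 1, ENNReal.ofReal (|quantile p t - quantile q t| ^ n) := by
  obtain ⟨k, rfl⟩ := Nat.exists_eq_add_of_le' hn
  rw [← lintegral_edist_pow_quantileCoupling]
  refine IsLeast.csInf_eq ⟨mem_image_of_mem _ (quantileCoupling_mem_couplings p q), ?_⟩
  rintro _ ⟨ν, hν, rfl⟩
  simp only [← costKernel_separatingPairs]
  exact lintegral_separatingPairs_quantileCoupling_le _ (ae_fst_le_snd_costKernel k) hν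

/-- The `n`-th power of the `n`-th Wasserstein distance between two probability measures
on `ℝ` with finite `n`-th moments equals the integral over `(0,1)` of the `n`-th power of
the distance between their quantile functions. -/
theorem wasserstein_eq_integral_quantile (n : ℕ) (hn : 1 ≤ n)
    (p q : Measure ℝ) [IsProbabilityMeasure p] [IsProbabilityMeasure q]
    (hp : ∫⁻ x, (‖x‖₊ : ENNReal) ^ n ∂p ≠ ⊤)
    (hq : ∫⁻ x, (‖x‖₊ : ENNReal) ^ n ∂q ≠ ⊤) :
    sInf ((fun ν => ∫⁻ z, edist z.1 z.2 ^ n ∂ν) '' couplings p q)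
      = ∫⁻ t in Ioo (0 : ℝ) 1, ENNReal.ofReal (|quantile p t - quantile q t| ^ n) :=
  wasserstein_eq_integral_quantile_general n hn p q
end

section
/- Let p and q be atomless probability measures on ℝ with cumulative distribution functions P and Q, and let γ ∈ Γ(p,q) be a coupling with monotone support. Then for every (x, y) ∈ supp(γ), P(x) = Q(y). -/
open MeasureTheory ProbabilityTheory Set

/-- The (topological) support of a measure: points all of whose open neighbourhoods
have positive measure. -/
def measureSupport {α : Type*} [TopologicalSpace α] [MeasurableSpace α]
    (μ : Measure α) : Set α :=
  {x | ∀ U : Set α, IsOpen U → x ∈ U → 0 < μ U}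

/-!
The support of `γ` is conull, and monotonicity compares each of its points `a` with `(x, y)`:
if `a.1 < x` then `a.2 ≤ y`, and if `a.2 < y` then `a.1 ≤ x`. Hence `P(x⁻) ≤ Q(y)` and `Q(y⁻) ≤ P(x)`, and
without atoms the left limits equal the values.
-/

section Support

variable {X : Type*} [TopologicalSpace X] [MeasurableSpace X]

lemma measureSupport_eq_support (μ : Measure X) : measureSupport μ = μ.support := by
  rw [Measure.support_eq_forall_isOpen]
  exact Set.ext fun x => forall_congr' fun U => imp.swap

lemma measureSupport_mem_ae [HereditarilyLindelofSpace X] (μ : Measure X) :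
    measureSupport μ ∈ ae μ :=
  measureSupport_eq_support μ ▸ Measure.support_mem_ae

lemma measure_le_of_inter_measureSupport_subset [HereditarilyLindelofSpace X] {μ : Measure X}
    {s t : Set X} (h : measureSupport μ ∩ s ⊆ t) : μ s ≤ μ t :=
  measure_mono_ae <| by
    filter_upwards [measureSupport_mem_ae μ] with x hx hs using h ⟨hx, hs⟩

end Support

section Couplings

variable {α β : Type*} [MeasurableSpace α] [MeasurableSpace β]
  {p : Measure α} {q : Measure β} {γ : Measure (α × β)}

lemma measure_preimage_fst_of_mem_couplings (hγ : γ ∈ couplings p q) {s : Set α}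
    (hs : MeasurableSet s) : γ (Prod.fst ⁻¹' s) = p s := by
  rw [← hγ.1, Measure.map_apply measurable_fst hs]

lemma measure_preimage_snd_of_mem_couplings (hγ : γ ∈ couplings p q) {s : Set β}
    (hs : MeasurableSet s) : γ (Prod.snd ⁻¹' s) = q s := by
  rw [← hγ.2, Measure.map_apply measurable_snd hs]

end Couplings

def HasMonotoneSupport {α β : Type*} [LinearOrder α] [LinearOrder β] [TopologicalSpace α]
    [TopologicalSpace β] [MeasurableSpace α] [MeasurableSpace β] (γ : Measure (α × β)) : Prop :=
  ∀ a ∈ measureSupport γ, ∀ b ∈ measureSupport γ, a.1 < b.1 → a.2 ≤ b.2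

namespace HasMonotoneSupport

variable {α β : Type*} [LinearOrder α] [LinearOrder β] [TopologicalSpace α] [TopologicalSpace β]
  [OrderClosedTopology α] [OrderClosedTopology β] [MeasurableSpace α] [MeasurableSpace β]
  [OpensMeasurableSpace α] [OpensMeasurableSpace β] [HereditarilyLindelofSpace (α × β)]
  {p : Measure α} {q : Measure β} {γ : Measure (α × β)} {z : α × β}

lemma measure_Iio_fst_le (hmono : HasMonotoneSupport γ) (hγ : γ ∈ couplings p q)
    (hz : z ∈ measureSupport γ) : p (Iio z.1) ≤ q (Iic z.2) := by
  rw [← measure_preimage_fst_of_mem_couplings hγ measurableSet_Iio,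
    ← measure_preimage_snd_of_mem_couplings hγ measurableSet_Iic]
  exact measure_le_of_inter_measureSupport_subset fun a ⟨ha, hlt⟩ => hmono a ha z hz hlt

lemma measure_Iio_snd_le (hmono : HasMonotoneSupport γ) (hγ : γ ∈ couplings p q)
    (hz : z ∈ measureSupport γ) : q (Iio z.2) ≤ p (Iic z.1) := by
  rw [← measure_preimage_fst_of_mem_couplings hγ measurableSet_Iic,
    ← measure_preimage_snd_of_mem_couplings hγ measurableSet_Iio]
  exact measure_le_of_inter_measureSupport_subset fun b ⟨hb, hlt⟩ =>
    le_of_not_gt fun hgt => (hmono z hz b hb hgt).not_gt hlt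

end HasMonotoneSupport

/-- If `p` and `q` are atomless probability measures on `ℝ` and `γ` is a coupling of
`p` and `q` with monotone support, then the CDFs of `p` and `q` agree on each pair
in the support of `γ`: `P(x) = Q(y)` for `(x, y) ∈ supp(γ)`. -/
theorem cdf_eq_on_monotone_support (p q : Measure ℝ)
    [IsProbabilityMeasure p] [IsProbabilityMeasure q] [NullSingletonClass p] [NullSingletonClass q]
    (γ : Measure (ℝ × ℝ)) (hγ : γ ∈ couplings p q)
    (hmono : ∀ a ∈ measureSupport γ, ∀ b ∈ measureSupport γ, a.1 < b.1 → a.2 ≤ b.2) :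
    ∀ z ∈ measureSupport γ, cdf p z.1 = cdf q z.2 := by
  intro z hz
  have hmono : HasMonotoneSupport γ := hmono
  have hIic : p (Iic z.1) = q (Iic z.2) := by
    refine le_antisymm ?_ ?_
    · rw [← measure_congr (Iio_ae_eq_Iic (μ := p))]
      exact hmono.measure_Iio_fst_le hγ hz
    · rw [← measure_congr (Iio_ae_eq_Iic (μ := q))]
      exact hmono.measure_Iio_snd_le hγ hz
  rw [cdf_eq_real, cdf_eq_real, measureReal_def, measureReal_def, hIic]
end
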